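/- Let Γ = (G, S) be a string C-group such that G acts faithfully on {1,…,n} and, for some perfect i-split {a,b} of Γ with i ∉ {0, r−1}, suppose neither a nor b is fixed by Gᵢ = ⟨ρⱼ : j ≠ i⟩, Γ admits a fracture graph, and αᵢ (the part of ρᵢ acting on the orbit O₁ containing a) is trivial. Then the key subgroup computation in the rank-and-degree extension holds: writing X = a^{G_{0,r−1}}, X' = X ∪ {c}, the parabolic subgroup (G^{i↑})_{0,r} of the extension contains Alt(X'), and since δᵢ = (a,c) ∈ (G^{i↑})_{0,r}, it equals Sym(X') × H × K, where H and K are the actions of G_{0,r−1} on Fix(G_{>i}) \ X and Fix(G_{<i}) \ X, respectively. -/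

import Mathlib

/-!
Since `δᵢ = (a, c)` lies in `P` and `ρᵢ = δᵢ δᵢ₊₁ δᵢ`, the group `P` contains the copy of
`G_{0,r-1}` acting on `Ω ∪ {c}` and fixing `c`. Conjugating `(a, c)` by it gives every
transposition `(x, c)` with `x ∈ X`, hence `Sym(X') ≤ P`. Every generator of `P` agrees off `X'`
with an element of `G_{0,r-1}`, so `P` is exactly the group of permutations that agree off `X'`
with some element of `G_{0,r-1}`. Finally, outside `X` the group `G_{0,r-1}` acts independently on
`Z` and on `W = (X ∪ Z)ᶜ ⊆ Y`: the generators `ρⱼ` with `j < i` fix `Z` pointwise, and those with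
`j ≥ i` fix `W ⊆ O₁ \ {a}` pointwise. So agreeing with one element on `Y` and with another on `Z`
is the same as agreeing with a single element off `X`.
-/

open Equiv MulAction Set
open scoped Pointwise

namespace Equiv.Perm

variable {α : Type*}

def optionCongrHom : Perm α →* Perm (Option α) where
  toFun σ := optionCongr σ
  map_one' := optionCongr_one
  map_mul' σ τ := by ext (_ | _) <;> simp

theorem apply_mem_iff_of_mem_stabilizer {g : Perm α} {S : Set α}
    (hg : g ∈ stabilizer (Perm α) S) (x : α) : g x ∈ S ↔ x ∈ S :=
  mem_stabilizer_set.1 hg x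

theorem le_stabilizer_setOf_exists_apply_eq (H : Subgroup (Perm α)) (a : α) :
    H ≤ stabilizer (Perm α) {x | ∃ g ∈ H, g a = x} := by
  refine fun h hh => mem_stabilizer_set.2 fun x => ⟨?_, ?_⟩
  · rintro ⟨g, hg, hgx⟩
    exact ⟨h⁻¹ * g, mul_mem (inv_mem hh) hg, by simp [hgx]⟩
  · rintro ⟨g, hg, rfl⟩
    exact ⟨h * g, mul_mem hh hg, rfl⟩

theorem fixingSubgroup_compl_le_of_swap_mem [Finite α] [DecidableEq α] {P : Subgroup (Perm α)}
    {T : Set α} (h : ∀ x ∈ T, ∀ y ∈ T, swap x y ∈ P) : fixingSubgroup (Perm α) Tᶜ ≤ P := by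
  classical
  intro g hg
  have hfix : ∀ x ∉ T, g x = x := fun x hx => (mem_fixingSubgroup_iff (Perm α)).1 hg x hx
  have hmove : ∀ x, g x ≠ x → x ∈ T := fun x hx => by_contra fun hxT => hx (hfix x hxT)
  have hT : ∀ x, g x ∈ T ↔ x ∈ T := fun x =>
    ⟨fun hgx => by_contra fun hx => hx (hfix x hx ▸ hgx),
      fun hx => by_contra fun hgx => hgx (by rwa [g.injective (hfix _ hgx)])⟩
  have hsym : (⊤ : Subgroup (Perm T)).map ofSubtype ≤ P := by
    rw [← closure_isSwap, MonoidHom.map_closure, Subgroup.closure_le]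
    rintro _ ⟨σ, ⟨x, y, -, rfl⟩, rfl⟩
    rw [SetLike.mem_coe, ofSubtype_swap_eq]
    exact h x x.2 y y.2
  rw [← ofSubtype_subtypePerm hT hmove]
  exact hsym ⟨_, Subgroup.mem_top _, rfl⟩

theorem swap_mem_of_forall_swap_mem [DecidableEq α] {P : Subgroup (Perm α)} {T : Set α} {c : α}
    (h : ∀ x ∈ T, swap x c ∈ P) : ∀ x ∈ insert c T, ∀ y ∈ insert c T, swap x y ∈ P := by
  intro x hx y hy
  obtain rfl | hxy := eq_or_ne x y
  · rw [swap_self]; exact one_mem P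
  obtain rfl | hx := hx
  · rw [swap_comm]; exact h y (hy.resolve_left hxy.symm)
  obtain rfl | hy := hy
  · exact h x hx
  obtain rfl | hyc := eq_or_ne y c
  · exact h x hx
  rw [← swap_mul_swap_mul_swap hyc hxy.symm, swap_comm c x]
  exact mul_mem (mul_mem (h x hx) (h y hy)) (h x hx)

section agreeOutside

/-- For `K` stabilising `T`, this is `Sym(T) ⋊ K`: see `agreeOutside_le`. -/
def agreeOutside (K : Subgroup (Perm α)) (T : Set α) (hK : K ≤ stabilizer (Perm α) T) :
    Subgroup (Perm α) where
  carrier := {g | ∃ k ∈ K, ∀ x ∉ T, g x = k x}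
  one_mem' := ⟨1, one_mem K, fun _ _ => rfl⟩
  mul_mem' := by
    rintro g₁ g₂ ⟨k₁, hk₁, h₁⟩ ⟨k₂, hk₂, h₂⟩
    refine ⟨k₁ * k₂, mul_mem hk₁ hk₂, fun x hx => ?_⟩
    have hk₂x : k₂ x ∉ T := (apply_mem_iff_of_mem_stabilizer (hK hk₂) x).not.2 hx
    rw [mul_apply, mul_apply, h₂ x hx, h₁ _ hk₂x]
  inv_mem' := by
    rintro g ⟨k, hk, h⟩
    refine ⟨k⁻¹, inv_mem hk, fun x hx => ?_⟩
    have hkx : k⁻¹ x ∉ T := (apply_mem_iff_of_mem_stabilizer (hK (inv_mem hk)) x).not.2 hx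
    rw [inv_eq_iff_eq, h _ hkx]
    simp

variable {K : Subgroup (Perm α)} {T : Set α} (hK : K ≤ stabilizer (Perm α) T)

theorem le_agreeOutside : K ≤ agreeOutside K T hK := fun k hk => ⟨k, hk, fun _ _ => rfl⟩

theorem fixingSubgroup_compl_le_agreeOutside :
    fixingSubgroup (Perm α) Tᶜ ≤ agreeOutside K T hK :=
  fun _ hg => ⟨1, one_mem K, fun x hx => (mem_fixingSubgroup_iff (Perm α)).1 hg x hx⟩

theorem agreeOutside_le {P : Subgroup (Perm α)} (hT : fixingSubgroup (Perm α) Tᶜ ≤ P)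
    (hKP : K ≤ P) : agreeOutside K T hK ≤ P := by
  rintro g ⟨k, hk, h⟩
  have hgk : g * k⁻¹ ∈ fixingSubgroup (Perm α) Tᶜ := by
    refine (mem_fixingSubgroup_iff (Perm α)).2 fun x hx => ?_
    have hkx : k⁻¹ x ∉ T := (apply_mem_iff_of_mem_stabilizer (hK (inv_mem hk)) x).not.2 hx
    rw [Perm.smul_def, mul_apply, h _ hkx]
    simp
  simpa using mul_mem (hT hgk) (hKP hk)

theorem agreeOutside_le_stabilizer : agreeOutside K T hK ≤ stabilizer (Perm α) T := by
  rintro g ⟨k, hk, h⟩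
  refine mem_stabilizer_set.2 fun x =>
    ⟨fun hgx => by_contra fun hx => ?_, fun hx => by_contra fun hgx => ?_⟩
  · exact hx ((apply_mem_iff_of_mem_stabilizer (hK hk) x).1 (h x hx ▸ hgx))
  · have hkx : k⁻¹ (g x) ∉ T := (apply_mem_iff_of_mem_stabilizer (hK (inv_mem hk)) _).not.2 hgx
    have hx' : k⁻¹ (g x) = x := g.injective (by rw [h _ hkx]; simp)
    exact hkx (hx'.symm ▸ hx)

end agreeOutside

theorem exists_mem_closure_eqOn_forall_apply_eq_self {R : Set (Perm α)} {A B : Set α}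
    (hA : Subgroup.closure R ≤ stabilizer (Perm α) A)
    (hR : ∀ t ∈ R, (∀ x ∈ A, t x = x) ∨ ∀ x ∈ B, t x = x) {g : Perm α}
    (hg : g ∈ Subgroup.closure R) :
    ∃ h ∈ Subgroup.closure R, EqOn h g A ∧ ∀ x ∈ B, h x = x := by
  induction hg using Subgroup.closure_induction with
  | mem t ht =>
    rcases hR t ht with hfixA | hfixB
    · exact ⟨1, one_mem _, fun x hx => (hfixA x hx).symm, fun _ _ => rfl⟩
    · exact ⟨t, Subgroup.subset_closure ht, fun _ _ => rfl, hfixB⟩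
  | one => exact ⟨1, one_mem _, fun _ _ => rfl, fun _ _ => rfl⟩
  | mul g₁ g₂ _ hg₂ ih₁ ih₂ =>
    obtain ⟨h₁, hh₁, e₁, f₁⟩ := ih₁
    obtain ⟨h₂, hh₂, e₂, f₂⟩ := ih₂
    refine ⟨h₁ * h₂, mul_mem hh₁ hh₂, fun x hx => ?_, fun x hx => ?_⟩
    · have hg₂x : g₂ x ∈ A := (apply_mem_iff_of_mem_stabilizer (hA hg₂) x).2 hx
      rw [mul_apply, mul_apply, e₂ hx, e₁ hg₂x]
    · rw [mul_apply, f₂ x hx, f₁ x hx]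
  | inv g hg ih =>
    obtain ⟨h, hh, e, f⟩ := ih
    refine ⟨h⁻¹, inv_mem hh, fun x hx => ?_, fun x hx => ?_⟩
    · have hgx : g⁻¹ x ∈ A := (apply_mem_iff_of_mem_stabilizer (hA (inv_mem hg)) x).2 hx
      rw [inv_eq_iff_eq, e hgx]
      simp
    · rw [inv_eq_iff_eq, f x hx]

theorem exists_mem_closure_eqOn_eqOn {R : Set (Perm α)} {A B : Set α}
    (hA : Subgroup.closure R ≤ stabilizer (Perm α) A)
    (hB : Subgroup.closure R ≤ stabilizer (Perm α) B)
    (hR : ∀ t ∈ R, (∀ x ∈ A, t x = x) ∨ ∀ x ∈ B, t x = x) {g₁ g₂ : Perm α}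
    (hg₁ : g₁ ∈ Subgroup.closure R) (hg₂ : g₂ ∈ Subgroup.closure R) :
    ∃ h ∈ Subgroup.closure R, EqOn h g₁ A ∧ EqOn h g₂ B := by
  obtain ⟨h₁, hh₁, e₁, f₁⟩ := exists_mem_closure_eqOn_forall_apply_eq_self hA hR hg₁
  obtain ⟨h₂, hh₂, e₂, f₂⟩ :=
    exists_mem_closure_eqOn_forall_apply_eq_self hB (fun t ht => (hR t ht).symm) hg₂
  refine ⟨h₁ * h₂, mul_mem hh₁ hh₂, fun x hx => ?_, fun x hx => ?_⟩
  · rw [mul_apply, f₂ x hx, e₁ hx]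
  · have hh₂x : h₂ x ∈ B := (apply_mem_iff_of_mem_stabilizer (hB hh₂) x).2 hx
    rw [mul_apply, f₁ _ hh₂x, e₂ hx]

theorem exists_mem_closure_forall_notMem_eq {γ : Type*} {R : Set (Perm α)} {X Y Z : Set α}
    (hX : Subgroup.closure R ≤ stabilizer (Perm α) X)
    (hZ : Subgroup.closure R ≤ stabilizer (Perm α) Z)
    (hR : ∀ t ∈ R, (∀ x ∈ Z, t x = x) ∨ ∀ x ∈ (X ∪ Z)ᶜ, t x = x) (hY : (X ∪ Z)ᶜ ⊆ Y)
    {f : α → γ} {e : α → γ} {h₁ h₂ : Perm α} (hh₁ : h₁ ∈ Subgroup.closure R)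
    (hh₂ : h₂ ∈ Subgroup.closure R) (e₁ : ∀ y ∈ Y, f y = e (h₁ y))
    (e₂ : ∀ z ∈ Z, f z = e (h₂ z)) :
    ∃ h ∈ Subgroup.closure R, ∀ x ∉ X, f x = e (h x) := by
  have hW : Subgroup.closure R ≤ stabilizer (Perm α) (X ∪ Z)ᶜ := by
    rw [stabilizer_compl]
    exact (le_inf hX hZ).trans stabilizer_inf_stabilizer_le_stabilizer_union
  obtain ⟨h, hh, eW, eZ⟩ :=
    exists_mem_closure_eqOn_eqOn hW hZ (fun t ht => (hR t ht).symm) hh₁ hh₂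
  refine ⟨h, hh, fun x hxX => ?_⟩
  by_cases hxZ : x ∈ Z
  · rw [e₂ x hxZ, eZ hxZ]
  · have hxW : x ∈ (X ∪ Z)ᶜ := by simp [hxX, hxZ]
    rw [e₁ x (hY hxW), eW hxW]

theorem map_optionCongrHom_le_stabilizer {H : Subgroup (Perm α)} {S : Set α}
    (hH : H ≤ stabilizer (Perm α) S) :
    H.map optionCongrHom ≤ stabilizer (Perm (Option α)) (insert none (some '' S)) := by
  rintro _ ⟨h, hh, rfl⟩
  refine mem_stabilizer_set.2 ?_
  rintro (_ | x)
  · simp [optionCongrHom]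
  · simpa [optionCongrHom] using apply_mem_iff_of_mem_stabilizer (hH hh) x

theorem mem_agreeOutside_map_optionCongrHom_iff {H : Subgroup (Perm α)} {S : Set α}
    (hH : H ≤ stabilizer (Perm α) S) {g : Perm (Option α)} :
    g ∈ agreeOutside (H.map optionCongrHom) _ (map_optionCongrHom_le_stabilizer hH) ↔
      ∃ h ∈ H, ∀ x ∉ S, g (some x) = some (h x) := by
  constructor
  · rintro ⟨_, ⟨h, hh, rfl⟩, e⟩
    exact ⟨h, hh, fun x hx => by simpa [optionCongrHom] using e (some x) (by simpa using hx)⟩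
  · rintro ⟨h, hh, e⟩
    refine ⟨_, ⟨h, hh, rfl⟩, ?_⟩
    rintro (_ | x) hx
    · simp at hx
    · simpa [optionCongrHom] using e x (by simpa using hx)

theorem swap_mul_apply_of_ne [DecidableEq α] {a b x : α} {β : Perm α} (ha : β a = a)
    (hb : β b = b) (hxa : x ≠ a) (hxb : x ≠ b) : (swap a b * β) x = β x := by
  rw [mul_apply, swap_apply_of_ne_of_ne (β.injective.ne_iff' ha |>.2 hxa)
    (β.injective.ne_iff' hb |>.2 hxb)]

/-- With `c = none`, `δᵢ = (a, c)` and `δᵢ₊₁ = β (c, b)`, this is `ρᵢ = δᵢ δᵢ₊₁ δᵢ`. -/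
theorem optionCongr_swap_mul [DecidableEq α] {a b : α} {β : Perm α} (hab : a ≠ b)
    (ha : β a = a) (hb : β b = b) :
    optionCongr (swap a b * β) =
      swap (some a) none * (optionCongr β * swap none (some b)) * swap (some a) none := by
  ext (_ | x) : 1
  · simp [swap_apply_def, ha, hab]
  · have hβa : β x = a ↔ x = a := β.injective.eq_iff' ha
    have hβb : β x = b ↔ x = b := β.injective.eq_iff' hb
    by_cases hxa : x = a <;> by_cases hxb : x = b <;> simp_all [swap_apply_def, hab.symm]

section Extension

variable [DecidableEq α] {R : Set (Perm α)} {t : Perm α} {a : α} {δ : Perm (Option α)}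

theorem map_closure_insert_le_closure
    (ht : optionCongr t = swap (some a) none * δ * swap (some a) none) :
    (Subgroup.closure (insert t R)).map optionCongrHom ≤
      Subgroup.closure (optionCongrHom '' R ∪ {swap (some a) none, δ}) := by
  rw [MonoidHom.map_closure, Subgroup.closure_le, image_insert_eq, insert_subset_iff]
  have hswap : swap (some a) none ∈
      Subgroup.closure (optionCongrHom '' R ∪ {swap (some a) none, δ}) :=
    Subgroup.subset_closure (by simp)
  refine ⟨?_, fun _ hσ => Subgroup.subset_closure (Or.inl hσ)⟩
  change optionCongr t ∈ _
  rw [ht]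
  exact mul_mem (mul_mem hswap (Subgroup.subset_closure (by simp))) hswap

theorem fixingSubgroup_compl_le_closure [Finite α]
    (ht : optionCongr t = swap (some a) none * δ * swap (some a) none) :
    fixingSubgroup (Perm (Option α))
        (insert none (some '' {x | ∃ g ∈ Subgroup.closure (insert t R), g a = x}))ᶜ ≤
      Subgroup.closure (optionCongrHom '' R ∪ {swap (some a) none, δ}) := by
  refine fixingSubgroup_compl_le_of_swap_mem (swap_mem_of_forall_swap_mem ?_)
  rintro _ ⟨_, ⟨g, hg, rfl⟩, rfl⟩
  have hg' := map_closure_insert_le_closure ht ⟨g, hg, rfl⟩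
  have := mul_mem (mul_mem hg' (Subgroup.subset_closure
    (show swap (some a) none ∈ _ ∪ {swap (some a) none, δ} by simp))) (inv_mem hg')
  rw [← swap_apply_apply] at this
  simpa [optionCongrHom] using this

theorem closure_eq_agreeOutside [Finite α]
    (ht : optionCongr t = swap (some a) none * δ * swap (some a) none) :
    Subgroup.closure (optionCongrHom '' R ∪ {swap (some a) none, δ}) =
      agreeOutside ((Subgroup.closure (insert t R)).map optionCongrHom) _
        (map_optionCongrHom_le_stabilizer (le_stabilizer_setOf_exists_apply_eq _ a)) := by
  refine le_antisymm ?_ (agreeOutside_le _ (fixingSubgroup_compl_le_closure ht)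
    (map_closure_insert_le_closure ht))
  have hswap : swap (some a) none ∈
      agreeOutside ((Subgroup.closure (insert t R)).map optionCongrHom) _
        (map_optionCongrHom_le_stabilizer (le_stabilizer_setOf_exists_apply_eq _ a)) := by
    refine fixingSubgroup_compl_le_agreeOutside _ ((mem_fixingSubgroup_iff _).2 fun x hx => ?_)
    have ha : some a ∈
        insert none (some '' {x | ∃ g ∈ Subgroup.closure (insert t R), g a = x}) :=
      Or.inr ⟨a, ⟨1, one_mem _, rfl⟩, rfl⟩
    exact swap_apply_of_ne_of_ne (fun h => hx (h ▸ ha)) (fun h => hx (h ▸ Or.inl rfl))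
  rw [Subgroup.closure_le]
  rintro _ (⟨σ, hσ, rfl⟩ | hδ | hδ)
  · exact le_agreeOutside _ ⟨σ, Subgroup.subset_closure (mem_insert_of_mem _ hσ), rfl⟩
  · exact hδ ▸ hswap
  · have hδ' : δ = swap (some a) none * optionCongr t * swap (some a) none := by
      rw [ht]; simp [mul_assoc]
    rw [mem_singleton_iff.1 hδ, hδ']
    exact mul_mem (mul_mem hswap
      (le_agreeOutside _ ⟨t, Subgroup.subset_closure (mem_insert _ _), rfl⟩)) hswap

end Extension

end Equiv.Perm

open Equiv.Perm

section SplitExtension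

variable {Ω : Type*} [Fintype Ω] [DecidableEq Ω] {ρ : ℕ → Perm Ω} {i : ℕ} {O₁ O₂ X : Set Ω}
  {a b : Ω} {β : Perm Ω}

theorem closure_le_stabilizer_fixed_lt_diff {r : ℕ} {J : Set ℕ}
    (hcomm : ∀ j k, j < r → k < r → 1 < Nat.dist j k → ρ j * ρ k = ρ k * ρ j)
    (hρi : ρ i = swap a b * β) (hβa : β a = a) (hβb : β b = b)
    (hβs : (β.support : Set Ω) ⊆ O₂ \ {b}) (hlt : ∀ j < i, ∀ x ∈ O₂, ρ j x = x)
    (hJ : ∀ j ∈ J, j < r) (hX : Subgroup.closure (ρ '' J) ≤ stabilizer (Perm Ω) X)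
    (ha : a ∈ X) (hb : b ∈ X) :
    Subgroup.closure (ρ '' J) ≤ stabilizer (Perm Ω) ({x | ∀ j < i, ρ j x = x} \ X) := by
  rw [Subgroup.closure_le]
  rintro _ ⟨j, hj, rfl⟩
  refine (mem_stabilizer_set' (toFinite _)).2 ?_
  rintro x ⟨hfix, hxX⟩
  refine ⟨fun k hk => ?_,
    (apply_mem_iff_of_mem_stabilizer (hX (Subgroup.subset_closure ⟨j, hj, rfl⟩)) x).not.2 hxX⟩
  rcases lt_trichotomy j i with hji | rfl | hij
  · rw [Perm.smul_def, hfix j hji, hfix k hk]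
  · rw [Perm.smul_def, hρi, swap_mul_apply_of_ne hβa hβb (ne_of_mem_of_not_mem ha hxX).symm
      (ne_of_mem_of_not_mem hb hxX).symm]
    by_cases hβx : β x = x
    · rw [hβx, hfix k hk]
    · exact hlt k hk _ (hβs (apply_mem_support.2 (mem_support.2 hβx))).1
  · have hkj : ρ k * ρ j = ρ j * ρ k :=
      hcomm k j (by have := hJ j hj; omega) (hJ j hj) (by unfold Nat.dist; omega)
    rw [Perm.smul_def, ← mul_apply, hkj, mul_apply, hfix k hk]

-- A point outside `X ∪ Z` is moved by some `ρⱼ` with `j < i`, so it lies in `O₁ \ {a}`.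
theorem apply_eq_self_of_mem_compl_union (hpart : O₁ ∪ O₂ = univ) (hρi : ρ i = swap a b * β)
    (hβs : (β.support : Set Ω) ⊆ O₂ \ {b}) (hb : b ∈ O₂) (hlt : ∀ j < i, ∀ x ∈ O₂, ρ j x = x)
    (hgt : ∀ j, i < j → ∀ x ∈ O₁, ρ j x = x) (ha : a ∈ X) {x : Ω}
    (hx : x ∈ (X ∪ ({x | ∀ j < i, ρ j x = x} \ X))ᶜ) {j : ℕ} (hij : i ≤ j) : ρ j x = x := by
  simp only [union_sdiff_self, compl_union, mem_inter_iff, mem_compl_iff, mem_ofPred_eq] at hx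
  have hxO₂ : x ∉ O₂ := fun h => hx.2 fun k hk => hlt k hk x h
  have hxO₁ : x ∈ O₁ := ((hpart ▸ mem_univ x : x ∈ O₁ ∪ O₂)).resolve_right hxO₂
  rcases hij.eq_or_lt with rfl | hij
  · rw [hρi, mul_apply, notMem_support.1 fun h => hxO₂ (hβs h).1, swap_apply_of_ne_of_ne
      (ne_of_mem_of_not_mem ha hx.1).symm (ne_of_mem_of_not_mem hb hxO₂).symm]
  · exact hgt j hij x hxO₁

theorem fixes_fixed_lt_diff_or_compl_union (hpart : O₁ ∪ O₂ = univ)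
    (hρi : ρ i = swap a b * β) (hβs : (β.support : Set Ω) ⊆ O₂ \ {b}) (hb : b ∈ O₂)
    (hlt : ∀ j < i, ∀ x ∈ O₂, ρ j x = x) (hgt : ∀ j, i < j → ∀ x ∈ O₁, ρ j x = x) (ha : a ∈ X)
    (J : Set ℕ) :
    ∀ s ∈ ρ '' J, (∀ x ∈ {x | ∀ j < i, ρ j x = x} \ X, s x = x) ∨
      ∀ x ∈ (X ∪ ({x | ∀ j < i, ρ j x = x} \ X))ᶜ, s x = x := by
  rintro _ ⟨j, -, rfl⟩
  rcases lt_or_ge j i with hji | hij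
  · exact Or.inl fun x hx => hx.1 j hji
  · exact Or.inr fun x hx =>
      apply_eq_self_of_mem_compl_union hpart hρi hβs hb hlt hgt ha hx hij

theorem compl_union_subset_fixed_gt_diff (hpart : O₁ ∪ O₂ = univ)
    (hρi : ρ i = swap a b * β) (hβs : (β.support : Set Ω) ⊆ O₂ \ {b}) (hb : b ∈ O₂)
    (hlt : ∀ j < i, ∀ x ∈ O₂, ρ j x = x) (hgt : ∀ j, i < j → ∀ x ∈ O₁, ρ j x = x) (ha : a ∈ X)
    (r : ℕ) :
    (X ∪ ({x | ∀ j < i, ρ j x = x} \ X))ᶜ ⊆ {x | ∀ j, i < j → j < r → ρ j x = x} \ X :=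
  fun _ hx => ⟨fun _ hij _ => apply_eq_self_of_mem_compl_union hpart hρi hβs hb hlt hgt ha hx
    hij.le, fun h => hx (Or.inl h)⟩

end SplitExtension

theorem stmt_14_general {Ω : Type*} [Fintype Ω] [DecidableEq Ω] {r i : ℕ}
    (ρ : ℕ → Equiv.Perm Ω)
    (hi0 : 0 < i) (hir : i < r - 1)
    (hcomm : ∀ j k, j < r → k < r → 1 < Nat.dist j k → ρ j * ρ k = ρ k * ρ j)
    -- the perfect i-split {a,b}, with trivial αᵢ
    (O₁ O₂ : Set Ω) (a b : Ω)
    (hpart : O₁ ∪ O₂ = Set.univ) (hdisj : Disjoint O₁ O₂)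
    (ha : a ∈ O₁) (hb : b ∈ O₂)
    (β : Equiv.Perm Ω)
    (hρi : ρ i = Equiv.swap a b * β)
    (hβs : (β.support : Set Ω) ⊆ O₂ \ {b})
    (hlt : ∀ j < i, ∀ x ∈ O₂, ρ j x = x)
    (hgt : ∀ j, i < j → ∀ x ∈ O₁, ρ j x = x)
    -- the relevant sets and subgroups
    (G0r : Subgroup (Equiv.Perm Ω))
    (hG0r : G0r = Subgroup.closure (ρ '' {j | 0 < j ∧ j < r - 1}))
    (X : Set Ω) (hX : X = {x : Ω | ∃ g ∈ G0r, g a = x})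
    (X' : Set (Option Ω)) (hX' : X' = insert none (some '' X))
    (Y : Set Ω) (hY : Y = {x : Ω | ∀ j, i < j → j < r → ρ j x = x} \ X)
    (Z : Set Ω) (hZ : Z = {x : Ω | ∀ j, j < i → ρ j x = x} \ X)
    (P : Subgroup (Equiv.Perm (Option Ω)))
    (hP : P = Subgroup.closure
      ((fun σ : Equiv.Perm Ω => Equiv.optionCongr σ) '' (ρ '' {j | 0 < j ∧ j < r - 1 ∧ j ≠ i}) ∪
        {Equiv.swap (some a) none, Equiv.optionCongr β * Equiv.swap none (some b)})) :
    (∀ g : Equiv.Perm (Option Ω), (g.support : Set (Option Ω)) ⊆ X' →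
        g ∈ alternatingGroup (Option Ω) → g ∈ P) ∧
    Equiv.swap (some a) none ∈ P ∧
    (P : Set (Equiv.Perm (Option Ω))) =
      {g : Equiv.Perm (Option Ω) |
        (∀ x : Option Ω, x ∈ X' ↔ g x ∈ X') ∧
        (∃ h ∈ G0r, ∀ y ∈ Y, g (some y) = some (h y)) ∧
        (∃ h ∈ G0r, ∀ z ∈ Z, g (some z) = some (h z))} := by
  have haO₂ : a ∉ O₂ := hdisj.notMem_of_mem_left ha
  have hβa : β a = a := notMem_support.1 fun h => haO₂ (hβs h).1
  have hβb : β b = b := notMem_support.1 fun h => (hβs h).2 rfl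
  have ht : optionCongr (ρ i) =
      swap (some a) none * (optionCongr β * swap none (some b)) * swap (some a) none := by
    rw [hρi]
    exact optionCongr_swap_mul (ne_of_mem_of_not_mem hb haO₂).symm hβa hβb
  have hgens : ρ '' {j | 0 < j ∧ j < r - 1} =
      insert (ρ i) (ρ '' {j | 0 < j ∧ j < r - 1 ∧ j ≠ i}) := by
    rw [← image_insert_eq]
    congr 1
    ext j
    simp only [mem_insert_iff, mem_ofPred_eq]
    omega
  have hXstab := hX ▸ le_stabilizer_setOf_exists_apply_eq G0r a
  have haX : a ∈ X := hX ▸ ⟨1, one_mem _, rfl⟩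
  have hbX : b ∈ X := hX ▸ ⟨ρ i, hG0r ▸ Subgroup.subset_closure ⟨i, ⟨hi0, hir⟩, rfl⟩,
    by rw [hρi, mul_apply, hβa, swap_apply_left]⟩
  subst hG0r hX' hY hZ hP
  have hZstab := closure_le_stabilizer_fixed_lt_diff hcomm hρi hβa hβb hβs hlt
    (fun j hj => by have := hj.2; omega) hXstab haX hbX
  have hR := fixes_fixed_lt_diff_or_compl_union hpart hρi hβs hb hlt hgt haX
    {j | 0 < j ∧ j < r - 1}
  have hWY := compl_union_subset_fixed_gt_diff hpart hρi hβs hb hlt hgt haX r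
  subst hX
  rw [hgens] at hXstab hZstab hR hWY ⊢
  rw [show (fun σ : Perm Ω => optionCongr σ) = optionCongrHom from rfl]
  refine ⟨fun g hg _ => fixingSubgroup_compl_le_closure ht
      ((mem_fixingSubgroup_iff _).2 fun x hx => notMem_support.1 fun h => hx (hg h)),
    Subgroup.subset_closure (by simp), ?_⟩
  ext g
  rw [SetLike.mem_coe, closure_eq_agreeOutside ht]
  constructor
  · intro hg
    obtain ⟨h, hh, e⟩ := (mem_agreeOutside_map_optionCongrHom_iff hXstab).1 hg
    exact ⟨fun x => (apply_mem_iff_of_mem_stabilizer (agreeOutside_le_stabilizer _ hg) x).symm,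
      ⟨h, hh, fun y hy => e y hy.2⟩, ⟨h, hh, fun z hz => e z hz.2⟩⟩
  · rintro ⟨-, ⟨h₁, hh₁, e₁⟩, h₂, hh₂, e₂⟩
    exact (mem_agreeOutside_map_optionCongrHom_iff hXstab).2
      (exists_mem_closure_forall_notMem_eq hXstab hZstab hR hWY hh₁ hh₂ e₁ e₂)

/-- Let `Γ = (G,S)` be a string C-group acting faithfully on a finite set
`Ω`, with a perfect `i`-split `{a,b}` (`i ∉ {0, r−1}`), such that neither `a` nor `b` is
fixed by `Gᵢ`, `Γ` admits a fracture graph, and the part `αᵢ` of `ρᵢ` acting on `O₁` is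
trivial (so `ρᵢ = (a,b)·βᵢ`). Let `X = a^{G_{0,r−1}}`, `X' = X ∪ {c}` (with `c = none` in
`Option Ω`), `Y = Fix(G_{>i}) \ X`, `Z = Fix(G_{<i}) \ X`. Then the parabolic subgroup
`P = (G^{i↑})_{0,r}` of the rank-and-degree extension contains `Alt(X')`, contains
`δᵢ = (a,c)`, and equals `Sym(X') × H × K`, where `H` and `K` are the actions of
`G_{0,r−1}` on `Y` and `Z` respectively (internally: `P` consists exactly of the
permutations preserving `X'` whose actions on `Y` and `Z` are induced by elements of
`G_{0,r−1}`). -/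
theorem stmt_14 {Ω : Type*} [Fintype Ω] [DecidableEq Ω] {r i : ℕ}
    (ρ : ℕ → Equiv.Perm Ω)
    (hi0 : 0 < i) (hir : i < r - 1) (hr : 2 ≤ r)
    (htriv : ∀ j, r ≤ j → ρ j = 1)
    (hinv : ∀ j < r, ρ j * ρ j = 1 ∧ ρ j ≠ 1)
    (hcomm : ∀ j k, j < r → k < r → 1 < Nat.dist j k → ρ j * ρ k = ρ k * ρ j)
    (hIP : ∀ J K : Set ℕ,
      Subgroup.closure (ρ '' J) ⊓ Subgroup.closure (ρ '' K) = Subgroup.closure (ρ '' (J ∩ K)))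
    -- the perfect i-split {a,b}, with trivial αᵢ
    (O₁ O₂ : Set Ω) (a b : Ω)
    (hpart : O₁ ∪ O₂ = Set.univ) (hdisj : Disjoint O₁ O₂)
    (ha : a ∈ O₁) (hb : b ∈ O₂)
    (β : Equiv.Perm Ω)
    (hρi : ρ i = Equiv.swap a b * β)
    (hβs : (β.support : Set Ω) ⊆ O₂ \ {b})
    (hlt : ∀ j < i, ∀ x ∈ O₂, ρ j x = x)
    (hgt : ∀ j, i < j → ∀ x ∈ O₁, ρ j x = x)
    -- neither a nor b is fixed by Gᵢ
    (hamoved : ∃ g ∈ Subgroup.closure (ρ '' {j | j < r ∧ j ≠ i}), g a ≠ a)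
    (hbmoved : ∃ g ∈ Subgroup.closure (ρ '' {j | j < r ∧ j ≠ i}), g b ≠ b)
    -- Γ admits a fracture graph
    (hfrac : ∀ j < r, ∃ x : Ω, ρ j x ≠ x ∧
      ¬ ∃ g ∈ Subgroup.closure (ρ '' {k | k < r ∧ k ≠ j}), g x = ρ j x)
    -- the relevant sets and subgroups
    (G0r : Subgroup (Equiv.Perm Ω))
    (hG0r : G0r = Subgroup.closure (ρ '' {j | 0 < j ∧ j < r - 1}))
    (X : Set Ω) (hX : X = {x : Ω | ∃ g ∈ G0r, g a = x})
    (X' : Set (Option Ω)) (hX' : X' = insert none (some '' X))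
    (Y : Set Ω) (hY : Y = {x : Ω | ∀ j, i < j → j < r → ρ j x = x} \ X)
    (Z : Set Ω) (hZ : Z = {x : Ω | ∀ j, j < i → ρ j x = x} \ X)
    (P : Subgroup (Equiv.Perm (Option Ω)))
    (hP : P = Subgroup.closure
      ((fun σ : Equiv.Perm Ω => Equiv.optionCongr σ) '' (ρ '' {j | 0 < j ∧ j < r - 1 ∧ j ≠ i}) ∪
        {Equiv.swap (some a) none, Equiv.optionCongr β * Equiv.swap none (some b)})) :
    (∀ g : Equiv.Perm (Option Ω), (g.support : Set (Option Ω)) ⊆ X' →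
        g ∈ alternatingGroup (Option Ω) → g ∈ P) ∧
    Equiv.swap (some a) none ∈ P ∧
    (P : Set (Equiv.Perm (Option Ω))) =
      {g : Equiv.Perm (Option Ω) |
        (∀ x : Option Ω, x ∈ X' ↔ g x ∈ X') ∧
        (∃ h ∈ G0r, ∀ y ∈ Y, g (some y) = some (h y)) ∧
        (∃ h ∈ G0r, ∀ z ∈ Z, g (some z) = some (h z))} :=
  stmt_14_general ρ hi0 hir hcomm O₁ O₂ a b hpart hdisj ha hb β hρi hβs hlt hgt G0r hG0r X hX X' hX'
    Y hY Z hZ P hP
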